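/- For |q| < 1 and any complex a, one has ∑_{n≥0} q^{binom(n,2)+n} (a;q)_n / (q;q)_n = (aq;q^2)_∞ / (q;q^2)_∞ (Lebesgue's identity). -/

import Mathlib

/-!
Write `F(a) = ∑ₙ Tₙ(a)` with `Tₙ(a) = q^(C(n,2)+n) (a;q)ₙ / (q;q)ₙ`. Comparing `(a;q)ₙ₊₁`
with `(aq;q)ₙ₊₁` gives the termwise identity `Tₙ₊₁(a) - Tₙ₊₁(aq) = (1 - aq) Tₙ(aq²) - Tₙ(aq)`, and
summing it yields `F(a) = (1 - aq) F(aq²)`. Iterating, `F(a) = (aq;q²)_N F(aq^{2N})`, and since `F` is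
continuous in `a` this gives `F(a) = (aq;q²)_∞ F(0)`. Finally `F(1) = 1` because `(1;q)ₙ = 0` for
`n ≥ 1`, so `(q;q²)_∞ F(0) = 1`.
-/

open Finset

noncomputable def qPoch (a q : ℂ) (n : ℕ) : ℂ := ∏ k ∈ Finset.range n, (1 - a * q ^ k)

noncomputable def qPochInf (a q : ℂ) : ℂ := ∏' k : ℕ, (1 - a * q ^ k)

open Filter Topology

lemma qPoch_succ (a q : ℂ) (n : ℕ) : qPoch a q (n + 1) = qPoch a q n * (1 - a * q ^ n) :=
  prod_range_succ _ _

lemma qPoch_succ' (a q : ℂ) (n : ℕ) : qPoch a q (n + 1) = (1 - a) * qPoch (a * q) q n := by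
  simp only [qPoch, prod_range_succ', pow_zero, mul_one, mul_assoc, ← pow_succ']
  ring

lemma qPoch_ne_zero {b q : ℂ} (hb : ‖b‖ < 1) (hq : ‖q‖ ≤ 1) (n : ℕ) : qPoch b q n ≠ 0 := by
  refine prod_ne_zero_iff.2 fun k _ h => ?_
  have : ‖b * q ^ k‖ < 1 := by
    rw [norm_mul, norm_pow]
    exact (mul_le_of_le_one_right (norm_nonneg b) (pow_le_one₀ (norm_nonneg q) hq)).trans_lt hb
  simp [← sub_eq_zero.1 h] at this

lemma norm_prod_range_le_exp_geometric {f : ℕ → ℂ} {C r : ℝ} (hC : 0 ≤ C) (hr₀ : 0 ≤ r)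
    (hr₁ : r < 1) (hf : ∀ k, ‖f k‖ ≤ Real.exp (C * r ^ k)) (n : ℕ) :
    ‖∏ k ∈ range n, f k‖ ≤ Real.exp (C / (1 - r)) := calc
  ‖∏ k ∈ range n, f k‖ ≤ ∏ k ∈ range n, Real.exp (C * r ^ k) := by
    rw [norm_prod]
    exact prod_le_prod (fun k _ => norm_nonneg _) fun k _ => hf k
  _ = Real.exp (C * ∑ k ∈ range n, r ^ k) := by rw [mul_sum, Real.exp_sum]
  _ ≤ Real.exp (C / (1 - r)) := by
    rw [Real.exp_le_exp, div_eq_mul_inv]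
    refine mul_le_mul_of_nonneg_left ?_ hC
    have h := geom_sum_Ico_le_of_lt_one (m := 0) (n := n) hr₀ hr₁
    rwa [← range_eq_Ico, pow_zero, one_div] at h

lemma norm_qPoch_le (b : ℂ) {q : ℂ} (hq : ‖q‖ < 1) (n : ℕ) :
    ‖qPoch b q n‖ ≤ Real.exp (‖b‖ / (1 - ‖q‖)) := by
  refine norm_prod_range_le_exp_geometric (norm_nonneg b) (norm_nonneg q) hq (fun k => ?_) n
  calc ‖1 - b * q ^ k‖ ≤ ‖(1 : ℂ)‖ + ‖b * q ^ k‖ := norm_sub_le _ _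
    _ = ‖b‖ * ‖q‖ ^ k + 1 := by simp [add_comm]
    _ ≤ Real.exp (‖b‖ * ‖q‖ ^ k) := Real.add_one_le_exp _

lemma norm_inv_qPoch_le {b q : ℂ} (hb : ‖b‖ < 1) (hq : ‖q‖ < 1) (n : ℕ) :
    ‖(qPoch b q n)⁻¹‖ ≤ Real.exp (‖b‖ / (1 - ‖b‖) / (1 - ‖q‖)) := by
  rw [qPoch, ← prod_inv_distrib]
  refine norm_prod_range_le_exp_geometric (div_nonneg (norm_nonneg b) (by linarith))
    (norm_nonneg q) hq (fun k => ?_) n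
  have hx : ‖b * q ^ k‖ ≤ ‖b‖ * ‖q‖ ^ k := by rw [norm_mul, norm_pow]
  have hx' : ‖b‖ * ‖q‖ ^ k ≤ ‖b‖ :=
    mul_le_of_le_one_right (norm_nonneg b) (pow_le_one₀ (norm_nonneg q) hq.le)
  have hpos : 0 < 1 - ‖b * q ^ k‖ := by linarith
  calc ‖(1 - b * q ^ k)⁻¹‖ ≤ (1 - ‖b * q ^ k‖)⁻¹ := by
        rw [norm_inv]
        gcongr
        simpa using norm_sub_norm_le (1 : ℂ) (b * q ^ k)
    _ = ‖b * q ^ k‖ / (1 - ‖b * q ^ k‖) + 1 := by field_simp; ring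
    _ ≤ ‖b‖ / (1 - ‖b‖) * ‖q‖ ^ k + 1 := by
        rw [div_mul_eq_mul_div]
        gcongr
        linarith
    _ ≤ Real.exp (‖b‖ / (1 - ‖b‖) * ‖q‖ ^ k) := Real.add_one_le_exp _

noncomputable def lebesgueTerm (a q : ℂ) (n : ℕ) : ℂ :=
  q ^ (n.choose 2 + n) * qPoch a q n / qPoch q q n

noncomputable def lebesgueSeries (a q : ℂ) : ℂ := ∑' n, lebesgueTerm a q n

lemma lebesgueTerm_zero (a q : ℂ) : lebesgueTerm a q 0 = 1 := by simp [lebesgueTerm, qPoch]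

lemma norm_lebesgueTerm_le {a q : ℂ} {A : ℝ} (ha : ‖a‖ ≤ A) (hq : ‖q‖ < 1) (n : ℕ) :
    ‖lebesgueTerm a q n‖ ≤
      Real.exp (A / (1 - ‖q‖)) * Real.exp (‖q‖ / (1 - ‖q‖) / (1 - ‖q‖)) * ‖q‖ ^ n := by
  rw [lebesgueTerm, div_eq_mul_inv, norm_mul, norm_mul, norm_pow]
  calc ‖q‖ ^ (n.choose 2 + n) * ‖qPoch a q n‖ * ‖(qPoch q q n)⁻¹‖
      ≤ ‖q‖ ^ n * Real.exp (A / (1 - ‖q‖)) * Real.exp (‖q‖ / (1 - ‖q‖) / (1 - ‖q‖)) := by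
        gcongr ?_ * ?_ * ?_
        · exact pow_le_pow_of_le_one (norm_nonneg q) hq.le (Nat.le_add_left n _)
        · exact (norm_qPoch_le a hq n).trans (by gcongr)
        · exact norm_inv_qPoch_le hq hq n
    _ = _ := by ring

lemma summable_lebesgueTerm (a : ℂ) {q : ℂ} (hq : ‖q‖ < 1) : Summable (lebesgueTerm a q) :=
  .of_norm_bounded ((summable_geometric_of_lt_one (norm_nonneg q) hq).mul_left _)
    (norm_lebesgueTerm_le le_rfl hq)

lemma lebesgueTerm_succ_sub {q : ℂ} (a : ℂ) {n : ℕ} (hn : qPoch q q (n + 1) ≠ 0) :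
    lebesgueTerm a q (n + 1) - lebesgueTerm (a * q) q (n + 1) =
      (1 - a * q) * lebesgueTerm (a * q ^ 2) q n - lebesgueTerm (a * q) q n := by
  rw [qPoch_succ] at hn
  obtain ⟨hn, hn'⟩ := mul_ne_zero_iff.1 hn
  have h : (1 - a * q) * qPoch (a * q ^ 2) q n = qPoch (a * q) q n * (1 - a * q * q ^ n) := by
    rw [← qPoch_succ, qPoch_succ', sq, mul_assoc]
  have hrhs : (1 - a * q) * lebesgueTerm (a * q ^ 2) q n =
      q ^ (n.choose 2 + n) * ((1 - a * q) * qPoch (a * q ^ 2) q n) / qPoch q q n := by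
    rw [lebesgueTerm]; ring
  rw [hrhs, h]
  simp only [lebesgueTerm, qPoch_succ' a, qPoch_succ, Nat.choose_succ_succ', Nat.choose_one_right]
  field_simp
  ring

lemma lebesgueSeries_eq_mul (a : ℂ) {q : ℂ} (hq : ‖q‖ < 1) :
    lebesgueSeries a q = (1 - a * q) * lebesgueSeries (a * q ^ 2) q := by
  have hshift (b : ℂ) : HasSum (fun n => lebesgueTerm b q (n + 1)) (lebesgueSeries b q - 1) := by
    simpa [lebesgueTerm_zero, lebesgueSeries] using
      (hasSum_nat_add_iff' 1).2 (summable_lebesgueTerm b hq).hasSum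
  have hdiff : HasSum (fun n => lebesgueTerm a q (n + 1) - lebesgueTerm (a * q) q (n + 1))
      ((1 - a * q) * lebesgueSeries (a * q ^ 2) q - lebesgueSeries (a * q) q) := by
    simpa only [lebesgueSeries, lebesgueTerm_succ_sub a (qPoch_ne_zero hq hq.le _)] using
      ((summable_lebesgueTerm (a * q ^ 2) hq).hasSum.mul_left (1 - a * q)).sub
        (summable_lebesgueTerm (a * q) hq).hasSum
  linear_combination ((hshift a).sub (hshift (a * q))).unique hdiff

lemma lebesgueSeries_eq_qPoch_mul (a : ℂ) {q : ℂ} (hq : ‖q‖ < 1) (N : ℕ) :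
    lebesgueSeries a q = qPoch (a * q) (q ^ 2) N * lebesgueSeries (a * (q ^ 2) ^ N) q := by
  induction N with
  | zero => simp [qPoch]
  | succ N ih =>
    rw [ih, lebesgueSeries_eq_mul _ hq, qPoch_succ]
    ring_nf

lemma continuous_lebesgueSeries {q : ℂ} (hq : ‖q‖ < 1) :
    Continuous fun a => lebesgueSeries a q := by
  refine continuous_iff_continuousAt.2 fun a₀ => ?_
  have hcont (n : ℕ) : Continuous fun a => lebesgueTerm a q n := by
    unfold lebesgueTerm qPoch
    fun_prop
  exact (continuousOn_tsum (fun n => (hcont n).continuousOn)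
    ((summable_geometric_of_lt_one (norm_nonneg q) hq).mul_left _)
    fun n a ha => norm_lebesgueTerm_le (norm_le_of_mem_closedBall ha) hq n).continuousAt
    (Metric.closedBall_mem_nhds a₀ one_pos)

lemma multipliable_one_sub_mul_pow (b : ℂ) {r : ℂ} (hr : ‖r‖ < 1) :
    Multipliable fun k : ℕ => 1 - b * r ^ k := by
  simpa [sub_eq_add_neg] using Complex.multipliable_one_add_of_summable
    ((summable_geometric_of_norm_lt_one hr).mul_left b).neg

lemma lebesgueSeries_eq_qPochInf_mul (a : ℂ) {q : ℂ} (hq : ‖q‖ < 1) :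
    lebesgueSeries a q = qPochInf (a * q) (q ^ 2) * lebesgueSeries 0 q := by
  have hq2 : ‖q ^ 2‖ < 1 := by
    rw [norm_pow]
    exact pow_lt_one₀ (norm_nonneg q) hq two_ne_zero
  have hprod : Tendsto (qPoch (a * q) (q ^ 2)) atTop (𝓝 (qPochInf (a * q) (q ^ 2))) :=
    (multipliable_one_sub_mul_pow _ hq2).hasProd.tendsto_prod_nat
  have hseries : Tendsto (fun N => lebesgueSeries (a * (q ^ 2) ^ N) q) atTop
      (𝓝 (lebesgueSeries 0 q)) := by
    have h := ((continuous_lebesgueSeries hq).tendsto (a * 0)).comp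
      ((tendsto_pow_atTop_nhds_zero_of_norm_lt_one hq2).const_mul a)
    rwa [mul_zero] at h
  exact tendsto_nhds_unique (tendsto_const_nhds.congr (lebesgueSeries_eq_qPoch_mul a hq))
    (hprod.mul hseries)

lemma lebesgueSeries_one (q : ℂ) : lebesgueSeries 1 q = 1 := by
  rw [lebesgueSeries, tsum_eq_single 0 fun n hn => ?_, lebesgueTerm_zero]
  obtain ⟨m, rfl⟩ := Nat.exists_eq_succ_of_ne_zero hn
  simp [lebesgueTerm, qPoch_succ']

theorem stmt8 (q a : ℂ) (hq : ‖q‖ < 1) :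
    ∑' n : ℕ, (q ^ (n.choose 2 + n) * qPoch a q n / qPoch q q n)
    = qPochInf (a * q) (q ^ 2) / qPochInf q (q ^ 2) := by
  have hinv : qPochInf q (q ^ 2) * lebesgueSeries 0 q = 1 := by
    simpa [lebesgueSeries_one] using (lebesgueSeries_eq_qPochInf_mul 1 hq).symm
  change lebesgueSeries a q = _
  rw [lebesgueSeries_eq_qPochInf_mul a hq, eq_inv_of_mul_eq_one_right hinv, div_eq_mul_inv]
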